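/- Let G be a Garside group of finite type in which some power of Δ is central, and let x ∈ G. There is a unique positive element ρ(x) (possibly trivial) such that: (1) x^{ρ(x)} ∈ SSS(x); and (2) ρ(x) ≼ α for every positive α ∈ G with x^α ∈ SSS(x). -/

import Mathlib

namespace GarsidePaper

/-- A Garside structure of finite type on a group `G`: a positive submonoid `P` with
`P ∩ P⁻¹ = {1}`, a Garside element `Δ ∈ P`, the prefix order `a ≼ b ↔ a⁻¹b ∈ P`
a lattice order (with meet `wedge` and join `vee`), the simple elements `[1,Δ]`
generating `G` and being finite, `Δ⁻¹PΔ = P`, a finite norm on positive elements,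
and the infimum and supremum functions `inf`, `sup` characterised by
`Δ^(inf x) ≼ x ≼ Δ^(sup x)` with `inf x` maximal and `sup x` minimal. -/
structure Garside (G : Type*) [Group G] where
  P : Submonoid G
  Δ : G
  purity : ∀ a : G, a ∈ P → a⁻¹ ∈ P → a = 1
  delta_mem : Δ ∈ P
  wedge : G → G → G
  vee : G → G → G
  wedge_le_left : ∀ a b : G, (wedge a b)⁻¹ * a ∈ P
  wedge_le_right : ∀ a b : G, (wedge a b)⁻¹ * b ∈ P
  le_wedge : ∀ a b c : G, c⁻¹ * a ∈ P → c⁻¹ * b ∈ P → c⁻¹ * wedge a b ∈ P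
  le_vee_left : ∀ a b : G, a⁻¹ * vee a b ∈ P
  le_vee_right : ∀ a b : G, b⁻¹ * vee a b ∈ P
  vee_le : ∀ a b c : G, a⁻¹ * c ∈ P → b⁻¹ * c ∈ P → (vee a b)⁻¹ * c ∈ P
  simples_generate : Subgroup.closure {a : G | a ∈ P ∧ a⁻¹ * Δ ∈ P} = (⊤ : Subgroup G)
  conj_pos : ∀ a : G, a ∈ P → Δ⁻¹ * a * Δ ∈ P
  norm : G → ℕ
  norm_exists : ∀ x : G, x ∈ P → x ≠ 1 →
    ∃ l : List G, (∀ s ∈ l, s ∈ P ∧ s ≠ 1) ∧ l.prod = x ∧ l.length = norm x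
  norm_max : ∀ x : G, x ∈ P → x ≠ 1 →
    ∀ l : List G, (∀ s ∈ l, s ∈ P ∧ s ≠ 1) → l.prod = x → l.length ≤ norm x
  simples_finite : Set.Finite {a : G | a ∈ P ∧ a⁻¹ * Δ ∈ P}
  inf : G → ℤ
  sup : G → ℤ
  inf_le : ∀ x : G, (Δ ^ inf x)⁻¹ * x ∈ P
  inf_max : ∀ (x : G) (p : ℤ), (Δ ^ p)⁻¹ * x ∈ P → p ≤ inf x
  le_sup : ∀ x : G, x⁻¹ * Δ ^ sup x ∈ P
  sup_min : ∀ (x : G) (q : ℤ), x⁻¹ * Δ ^ q ∈ P → sup x ≤ q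

namespace Garside

variable {G : Type*} [Group G]

/-- The prefix order `a ≼ b`. -/
def le (S : Garside G) (a b : G) : Prop := a⁻¹ * b ∈ S.P

/-- The canonical length `ℓ(x) = sup(x) - inf(x)`. -/
def len (S : Garside G) (x : G) : ℤ := S.sup x - S.inf x

/-- The initial factor `ι(x) = (x Δ^(-inf x)) ∧ Δ`. -/
def iota (S : Garside G) (x : G) : G := S.wedge (x * S.Δ ^ (-S.inf x)) S.Δ

/-- The preferred prefix `𝔭(x) = ι(x) ∧ ι(x⁻¹)`. -/
def pp (S : Garside G) (x : G) : G := S.wedge (S.iota x) (S.iota x⁻¹)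

/-- Cyclic sliding `𝔰(x) = 𝔭(x)⁻¹ x 𝔭(x)`. -/
def sl (S : Garside G) (x : G) : G := (S.pp x)⁻¹ * x * S.pp x

/-- The final factor `φ(x) = (Δ^(sup x - 1) ∧ x)⁻¹ x`. -/
def phi (S : Garside G) (x : G) : G := (S.wedge (S.Δ ^ (S.sup x - 1)) x)⁻¹ * x

/-- Conjugation by `Δ`: `τ(x) = Δ⁻¹ x Δ`. -/
def tau (S : Garside G) (x : G) : G := S.Δ⁻¹ * x * S.Δ

/-- Cycling `c(x) = ι(x)⁻¹ x ι(x)`. -/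
def cyc (S : Garside G) (x : G) : G := (S.iota x)⁻¹ * x * S.iota x

/-- Decycling `d(x) = φ(x) x φ(x)⁻¹`. -/
def dec (S : Garside G) (x : G) : G := S.phi x * x * (S.phi x)⁻¹

/-- The transport `α^{(1)} = 𝔭(x)⁻¹ α 𝔭(x^α)` of `α` at `x`. -/
def transport (S : Garside G) (x α : G) : G := (S.pp x)⁻¹ * α * S.pp (α⁻¹ * x * α)

/-- The iterated transport: `itTransport x i α = α^{(i)}`, the transport of `α^{(i-1)}`
at `𝔰^{i-1}(x)`, with `α^{(0)} = α`. -/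
def itTransport (S : Garside G) (x : G) : ℕ → G → G
  | 0, α => α
  | i + 1, α => S.transport ((S.sl)^[i] x) (S.itTransport x i α)

/-- `𝔓_i(x) = 𝔭(x) 𝔭(𝔰(x)) ⋯ 𝔭(𝔰^{i-1}(x))`, with `𝔓₀(x) = 1`. -/
def PP (S : Garside G) (x : G) : ℕ → G
  | 0 => 1
  | i + 1 => S.PP x i * S.pp ((S.sl)^[i] x)

/-- The summit set `SS(x)`. -/
def SS (S : Garside G) (x : G) : Set G :=
  {y | IsConj x y ∧ ∀ z : G, IsConj x z → S.inf z ≤ S.inf y}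

/-- The super summit set `SSS(x)`. -/
def SSS (S : Garside G) (x : G) : Set G :=
  {y | IsConj x y ∧ (∀ z : G, IsConj x z → S.inf z ≤ S.inf y) ∧
       (∀ z : G, IsConj x z → S.sup y ≤ S.sup z)}

/-- The ultra summit set `USS(x)`. -/
def USS (S : Garside G) (x : G) : Set G :=
  {y | y ∈ S.SSS x ∧ ∃ m : ℕ, 1 ≤ m ∧ (S.cyc)^[m] y = y}

/-- The reduced super summit set `RSSS(x)`. -/
def RSSS (S : Garside G) (x : G) : Set G :=
  {y | IsConj x y ∧ (∃ m : ℕ, 1 ≤ m ∧ (S.cyc)^[m] y = y) ∧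
       (∃ n : ℕ, 1 ≤ n ∧ (S.dec)^[n] y = y)}

/-- The set of sliding circuits `SC(x)`. -/
def SC (S : Garside G) (x : G) : Set G :=
  {y | IsConj x y ∧ ∃ m : ℕ, 1 ≤ m ∧ (S.sl)^[m] y = y}

end Garside

/-!
As a power of `Δ` is central, conjugation by every power of `Δ` preserves `P`, so `inf` and
`sup` behave additively under multiplication by powers of `Δ`, and comparing `x^k` with its
conjugate shows that `inf` is bounded above and `sup` below on a conjugacy class.

If `x^α` and `x^β` have `inf ≥ p` (resp. `sup ≤ q`), so does `x^(α ∧ β)`. Hence the positive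
conjugators of `x` into `SSS(x)` are closed under `∧`, and since a proper prefix of a positive
element has smaller norm, such a family has a `≼`-least element: this is `ρ(x)`.

It remains to reach `SSS(x)` by a positive conjugator. Let `m` be the least positive element
with `inf(z^m) ≥ p` and `Q = max(sup z, p)`. Then `z⁻¹ m Δ^Q` is positive and conjugates `z` to
`Δ^(-Q) z^m Δ^Q`, so `m ≼ z⁻¹ m Δ^Q`, which says exactly `sup(z^m) ≤ Q`: `inf` can be raised
without raising `sup`, and dually (through `x ↦ x⁻¹`) `sup` can be lowered without lowering `inf`.
-/

lemma isConj_inv_mul_mul {G : Type*} [Group G] (x g : G) : IsConj x (g⁻¹ * x * g) :=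
  isConj_iff.2 ⟨g⁻¹, by group⟩

namespace Garside

variable {G : Type*} [Group G] (S : Garside G)

lemma le_def {a b : G} : S.le a b ↔ a⁻¹ * b ∈ S.P := Iff.rfl

protected lemma le_refl (a : G) : S.le a a := by
  simp [le_def, S.P.one_mem]

protected lemma le_trans {a b c : G} (hab : S.le a b) (hbc : S.le b c) : S.le a c := by
  simpa [le_def, mul_assoc] using S.P.mul_mem hab hbc

protected lemma le_antisymm {a b : G} (hab : S.le a b) (hba : S.le b a) : a = b :=
  inv_mul_eq_one.mp (S.purity _ hab (by simpa [le_def] using hba))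

lemma one_le_iff {a : G} : S.le 1 a ↔ a ∈ S.P := by
  simp [le_def]

protected lemma mul_le_mul_iff_left (c : G) {a b : G} : S.le (c * a) (c * b) ↔ S.le a b := by
  simp [le_def, mul_assoc]

lemma mul_wedge (c a b : G) : c * S.wedge a b = S.wedge (c * a) (c * b) := by
  refine S.le_antisymm (S.le_wedge _ _ _ ?_ ?_) ?_
  · exact (S.mul_le_mul_iff_left c).2 (S.wedge_le_left a b)
  · exact (S.mul_le_mul_iff_left c).2 (S.wedge_le_right a b)
  · have key : S.le (c⁻¹ * S.wedge (c * a) (c * b)) (S.wedge a b) := S.le_wedge _ _ _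
      ((S.mul_le_mul_iff_left c).1 (by rw [mul_inv_cancel_left]; exact S.wedge_le_left _ _))
      ((S.mul_le_mul_iff_left c).1 (by rw [mul_inv_cancel_left]; exact S.wedge_le_right _ _))
    simpa using (S.mul_le_mul_iff_left c).2 key

lemma wedge_mem {a b : G} (ha : a ∈ S.P) (hb : b ∈ S.P) : S.wedge a b ∈ S.P :=
  S.one_le_iff.1 (S.le_wedge _ _ _ (S.one_le_iff.2 ha) (S.one_le_iff.2 hb))

lemma norm_pos {a : G} (ha : a ∈ S.P) (ha₁ : a ≠ 1) : 0 < S.norm a := by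
  obtain ⟨l, -, hprod, hlen⟩ := S.norm_exists a ha ha₁
  rcases l with _ | ⟨s, l⟩
  · exact absurd hprod.symm ha₁
  · simp [← hlen]

lemma norm_lt_norm {a b : G} (ha : a ∈ S.P) (ha₁ : a ≠ 1) (hab : S.le a b) (hne : a ≠ b) :
    S.norm a < S.norm b := by
  have hb : b ∈ S.P := by simpa using S.P.mul_mem ha hab
  have hb₁ : b ≠ 1 := by
    rintro rfl
    exact ha₁ (S.purity a ha (by simpa [le_def] using hab))
  have hr₁ : a⁻¹ * b ≠ 1 := fun h => hne (inv_mul_eq_one.mp h)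
  obtain ⟨l₁, hl₁, hprod₁, hlen₁⟩ := S.norm_exists a ha ha₁
  obtain ⟨l₂, hl₂, hprod₂, hlen₂⟩ := S.norm_exists _ hab hr₁
  have hle := S.norm_max b hb hb₁ (l₁ ++ l₂)
    (fun s hs => (List.mem_append.1 hs).elim (hl₁ s) (hl₂ s))
    (by rw [List.prod_append, hprod₁, hprod₂, mul_inv_cancel_left])
  have := S.norm_pos hab hr₁
  rw [List.length_append, hlen₁, hlen₂] at hle
  omega

lemma exists_le_forall_of_wedge_mem {D : Set G} (hne : D.Nonempty) (hP : ∀ a ∈ D, a ∈ S.P)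
    (hD : ∀ a ∈ D, ∀ b ∈ D, S.wedge a b ∈ D) : ∃ m ∈ D, ∀ f ∈ D, S.le m f := by
  by_cases h₁ : (1 : G) ∈ D
  · exact ⟨1, h₁, fun f hf => S.one_le_iff.2 (hP f hf)⟩
  obtain ⟨d, hd, hmin⟩ := (InvImage.wf S.norm wellFounded_lt).has_min D hne
  refine ⟨d, hd, fun f hf => ?_⟩
  by_cases heq : S.wedge d f = d
  · have h := S.wedge_le_right d f
    rw [heq] at h
    exact h
  · have hdf := hD d hd f hf
    exact absurd (S.norm_lt_norm (hP _ hdf) (fun h => h₁ (h ▸ hdf)) (S.wedge_le_left d f) heq)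
      (hmin _ hdf)

lemma pow_conj_mem (n : ℕ) {a : G} (ha : a ∈ S.P) : (S.Δ ^ n)⁻¹ * a * S.Δ ^ n ∈ S.P := by
  induction n with
  | zero => simpa using ha
  | succ n ih =>
    have h := S.conj_pos _ ih
    rwa [show S.Δ⁻¹ * ((S.Δ ^ n)⁻¹ * a * S.Δ ^ n) * S.Δ = (S.Δ ^ (n + 1))⁻¹ * a * S.Δ ^ (n + 1)
      by group] at h

lemma delta_mul_mul_inv_mem_of_central {e : ℕ} (he : 1 ≤ e)
    (hce : ∀ g : G, g * S.Δ ^ e = S.Δ ^ e * g) {a : G} (ha : a ∈ S.P) :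
    S.Δ * a * S.Δ⁻¹ ∈ S.P := by
  obtain ⟨n, rfl⟩ := Nat.exists_eq_add_of_le' he
  have h : S.Δ * a * S.Δ⁻¹ = (S.Δ ^ n)⁻¹ * a * S.Δ ^ n :=
    calc S.Δ * a * S.Δ⁻¹ = (S.Δ ^ n)⁻¹ * (S.Δ ^ (n + 1) * a) * S.Δ⁻¹ := by group
      _ = (S.Δ ^ n)⁻¹ * (a * S.Δ ^ (n + 1)) * S.Δ⁻¹ := by rw [hce a]
      _ = (S.Δ ^ n)⁻¹ * a * S.Δ ^ n := by group
  rw [h]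
  exact S.pow_conj_mem n ha

lemma zpow_delta_mem {n : ℤ} (hn : 0 ≤ n) : S.Δ ^ n ∈ S.P := by
  lift n to ℕ using hn
  simpa using pow_mem S.delta_mem n

lemma zpow_delta_mem_iff {n : ℤ} : S.Δ ^ n ∈ S.P ↔ 0 ≤ n := by
  refine ⟨fun h => ?_, S.zpow_delta_mem⟩
  by_contra! hn
  have hinv : S.Δ⁻¹ ∈ S.P := by
    have := S.P.mul_mem h (S.zpow_delta_mem (n := -n - 1) (by omega))
    rwa [← zpow_add, show n + (-n - 1) = -1 by ring, zpow_neg_one] at this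
  have hΔ : S.Δ = 1 := S.purity _ S.delta_mem hinv
  -- with `Δ = 1` every integer would be a lower bound for `inf 1`
  have := S.inf_max 1 (S.inf 1 + 1) (by simp [hΔ, S.P.one_mem])
  omega

lemma zpow_le_zpow_iff {a b : ℤ} : S.le (S.Δ ^ a) (S.Δ ^ b) ↔ a ≤ b := by
  rw [le_def, ← zpow_neg, ← zpow_add, zpow_delta_mem_iff]
  omega

protected lemma le_inf_iff {p : ℤ} {x : G} : p ≤ S.inf x ↔ S.le (S.Δ ^ p) x :=
  ⟨fun h => S.le_trans (S.zpow_le_zpow_iff.2 h) (S.inf_le x), S.inf_max x p⟩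

protected lemma sup_le_iff {q : ℤ} {x : G} : S.sup x ≤ q ↔ S.le x (S.Δ ^ q) :=
  ⟨fun h => S.le_trans (S.le_sup x) (S.zpow_le_zpow_iff.2 h), S.sup_min x q⟩

lemma inf_le_sup (x : G) : S.inf x ≤ S.sup x :=
  S.zpow_le_zpow_iff.1 (S.le_trans (S.inf_le x) (S.le_sup x))

lemma mem_of_inf_nonneg {a : G} (h : 0 ≤ S.inf a) : a ∈ S.P := by
  simpa [le_def] using S.le_inf_iff.1 h

lemma inf_zpow_mul (k : ℤ) (y : G) : S.inf (S.Δ ^ k * y) = k + S.inf y := by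
  refine eq_of_forall_le_iff fun p => ?_
  rw [S.le_inf_iff, show S.Δ ^ p = S.Δ ^ k * S.Δ ^ (p - k) by rw [← zpow_add]; ring_nf,
    S.mul_le_mul_iff_left, ← S.le_inf_iff]
  omega

lemma le_inf_conj_iff {p : ℤ} {z a : G} :
    p ≤ S.inf (a⁻¹ * z * a) ↔ S.le (a * S.Δ ^ p) (z * a) := by
  rw [S.le_inf_iff, ← S.mul_le_mul_iff_left a, show a * (a⁻¹ * z * a) = z * a by group]

section DeltaConj

variable {S} (hΔ : ∀ a ∈ S.P, S.Δ * a * S.Δ⁻¹ ∈ S.P)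
include hΔ

lemma zpow_conj_mem (k : ℤ) {a : G} (ha : a ∈ S.P) : (S.Δ ^ k)⁻¹ * a * S.Δ ^ k ∈ S.P := by
  induction k with
  | zero => simpa using ha
  | succ n ih =>
    have h := S.conj_pos _ ih
    rwa [show S.Δ⁻¹ * ((S.Δ ^ (n : ℤ))⁻¹ * a * S.Δ ^ (n : ℤ)) * S.Δ
      = (S.Δ ^ ((n : ℤ) + 1))⁻¹ * a * S.Δ ^ ((n : ℤ) + 1) by group] at h
  | pred n ih =>
    have h := hΔ _ ih
    rwa [show S.Δ * ((S.Δ ^ (-(n : ℤ)))⁻¹ * a * S.Δ ^ (-(n : ℤ))) * S.Δ⁻¹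
      = (S.Δ ^ (-(n : ℤ) - 1))⁻¹ * a * S.Δ ^ (-(n : ℤ) - 1) by group] at h

lemma zpow_conj_mem_iff (k : ℤ) {a : G} : (S.Δ ^ k)⁻¹ * a * S.Δ ^ k ∈ S.P ↔ a ∈ S.P := by
  refine ⟨fun h => ?_, zpow_conj_mem hΔ k⟩
  simpa [mul_assoc] using zpow_conj_mem hΔ (-k) h

lemma mul_zpow_le_mul_zpow_iff (k : ℤ) {a b : G} :
    S.le (a * S.Δ ^ k) (b * S.Δ ^ k) ↔ S.le a b := by
  rw [le_def, le_def,
    show (a * S.Δ ^ k)⁻¹ * (b * S.Δ ^ k) = (S.Δ ^ k)⁻¹ * (a⁻¹ * b) * S.Δ ^ k by group,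
    zpow_conj_mem_iff hΔ]

lemma inf_mul_zpow (g : G) (k : ℤ) : S.inf (g * S.Δ ^ k) = S.inf g + k := by
  refine eq_of_forall_le_iff fun p => ?_
  rw [S.le_inf_iff, show S.Δ ^ p = S.Δ ^ (p - k) * S.Δ ^ k by rw [← zpow_add]; ring_nf,
    mul_zpow_le_mul_zpow_iff hΔ, ← S.le_inf_iff]
  omega

lemma inf_conj_zpow (y : G) (k : ℤ) : S.inf ((S.Δ ^ k)⁻¹ * y * S.Δ ^ k) = S.inf y := by
  rw [mul_assoc, ← zpow_neg, S.inf_zpow_mul, inf_mul_zpow hΔ]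
  ring

lemma inf_inv (x : G) : S.inf x⁻¹ = -S.sup x := by
  refine eq_of_forall_le_iff fun p => ?_
  have key : S.le (S.Δ ^ p) x⁻¹ ↔ S.le x (S.Δ ^ (-p)) := by
    rw [le_def, le_def, ← zpow_conj_mem_iff hΔ (-p)]
    group
  rw [S.le_inf_iff, key, ← S.sup_le_iff]
  omega

lemma sup_inv (x : G) : S.sup x⁻¹ = -S.inf x := by
  have := inf_inv hΔ x⁻¹
  rw [inv_inv] at this
  omega

lemma sup_conj_eq_neg_inf (z g : G) : S.sup (g⁻¹ * z * g) = -S.inf (g⁻¹ * z⁻¹ * g) := by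
  rw [show g⁻¹ * z⁻¹ * g = (g⁻¹ * z * g)⁻¹ by group, inf_inv hΔ, neg_neg]

lemma le_inf_mul (a b : G) : S.inf a + S.inf b ≤ S.inf (a * b) := by
  rw [S.le_inf_iff, zpow_add]
  exact S.le_trans ((mul_zpow_le_mul_zpow_iff hΔ _).2 (S.inf_le a))
    ((S.mul_le_mul_iff_left a).2 (S.inf_le b))

lemma sup_mul_le (a b : G) : S.sup (a * b) ≤ S.sup a + S.sup b := by
  have := le_inf_mul hΔ b⁻¹ a⁻¹
  rw [← mul_inv_rev, inf_inv hΔ, inf_inv hΔ, inf_inv hΔ] at this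
  omega

lemma le_inf_pow (y : G) (k : ℕ) : k * S.inf y ≤ S.inf (y ^ k) := by
  induction k with
  | zero => simpa [S.le_inf_iff] using S.le_refl 1
  | succ k ih =>
    have := le_inf_mul hΔ (y ^ k) y
    rw [← pow_succ] at this
    push_cast
    linarith

lemma sup_pow_le (y : G) (k : ℕ) : S.sup (y ^ k) ≤ k * S.sup y := by
  have := le_inf_pow hΔ y⁻¹ k
  rw [inv_pow, inf_inv hΔ, inf_inv hΔ] at this
  linarith

/-- If `y = c x c⁻¹`, then `y^k c = c x^k` gives `k (inf y - sup x) ≤ sup c - inf c` for all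
`k`. -/
lemma inf_le_sup_of_isConj {x y : G} (h : IsConj x y) : S.inf y ≤ S.sup x := by
  obtain ⟨c, hc⟩ := isConj_iff.1 h
  have hsemi : ∀ k : ℕ, c * x ^ k = y ^ k * c := fun k =>
    SemiconjBy.pow_right (show c * x = y * c by rw [← hc, inv_mul_cancel_right]) k
  have hk : ∀ k : ℕ, (k : ℤ) * (S.inf y - S.sup x) ≤ S.sup c - S.inf c := fun k => by
    have h₁ := (le_inf_mul hΔ (y ^ k) c).trans (S.inf_le_sup _)
    rw [← hsemi] at h₁
    have := sup_mul_le hΔ c (x ^ k)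
    have := sup_pow_le hΔ x k
    have := le_inf_pow hΔ y k
    linarith
  by_contra! hxy
  have := hk (S.sup c - S.inf c).toNat.succ
  push_cast at this
  nlinarith [Int.self_le_toNat (S.sup c - S.inf c)]

lemma SS_nonempty (x : G) : (S.SS x).Nonempty := by
  obtain ⟨-, ⟨y, hy, rfl⟩, hmax⟩ :=
    Int.exists_greatest_of_bdd (P := fun p => ∃ y, IsConj x y ∧ S.inf y = p)
      ⟨S.sup x, by rintro _ ⟨y, hy, rfl⟩; exact inf_le_sup_of_isConj hΔ hy⟩ ⟨_, x, .refl x, rfl⟩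
  exact ⟨y, hy, fun z hz => hmax _ ⟨z, hz, rfl⟩⟩

lemma exists_isConj_sup_le (x : G) :
    ∃ y, IsConj x y ∧ ∀ z, IsConj x z → S.sup y ≤ S.sup z := by
  obtain ⟨-, ⟨y, hy, rfl⟩, hmin⟩ :=
    Int.exists_least_of_bdd (P := fun q => ∃ y, IsConj x y ∧ S.sup y = q)
      ⟨S.inf x, by rintro _ ⟨y, hy, rfl⟩; exact inf_le_sup_of_isConj hΔ hy.symm⟩
      ⟨_, x, .refl x, rfl⟩
  exact ⟨y, hy, fun z hz => hmin _ ⟨z, hz, rfl⟩⟩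

lemma le_inf_conj_wedge {p : ℤ} {z a b : G} (ha : p ≤ S.inf (a⁻¹ * z * a))
    (hb : p ≤ S.inf (b⁻¹ * z * b)) : p ≤ S.inf ((S.wedge a b)⁻¹ * z * S.wedge a b) := by
  rw [S.le_inf_conj_iff] at *
  rw [S.mul_wedge]
  exact S.le_wedge _ _ _
    (S.le_trans ((mul_zpow_le_mul_zpow_iff hΔ p).2 (S.wedge_le_left a b)) ha)
    (S.le_trans ((mul_zpow_le_mul_zpow_iff hΔ p).2 (S.wedge_le_right a b)) hb)

lemma sup_conj_wedge_le {q : ℤ} {z a b : G} (ha : S.sup (a⁻¹ * z * a) ≤ q)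
    (hb : S.sup (b⁻¹ * z * b) ≤ q) : S.sup ((S.wedge a b)⁻¹ * z * S.wedge a b) ≤ q := by
  rw [sup_conj_eq_neg_inf hΔ] at *
  have := le_inf_conj_wedge hΔ (p := -q) (z := z⁻¹) (a := a) (b := b) (by omega) (by omega)
  omega

lemma exists_mem_conj_inf_eq {z w : G} (hw : IsConj z w) :
    ∃ f ∈ S.P, S.inf (f⁻¹ * z * f) = S.inf w := by
  obtain ⟨c, rfl⟩ := isConj_iff.1 hw
  refine ⟨c⁻¹ * S.Δ ^ (-S.inf c⁻¹), S.mem_of_inf_nonneg ?_, ?_⟩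
  · rw [inf_mul_zpow hΔ]
    omega
  · rw [← inf_conj_zpow hΔ (c * z * c⁻¹) (-S.inf c⁻¹)]
    group

lemma exists_mem_conj_le_inf_sup_le {p : ℤ} {z w : G} (hw : IsConj z w) (hp : p ≤ S.inf w) :
    ∃ m ∈ S.P, p ≤ S.inf (m⁻¹ * z * m) ∧ S.sup (m⁻¹ * z * m) ≤ max (S.sup z) p := by
  obtain ⟨f, hf, hfw⟩ := exists_mem_conj_inf_eq hΔ hw
  obtain ⟨m, ⟨hm, hmz⟩, hmin⟩ :=
    S.exists_le_forall_of_wedge_mem (D := {f | f ∈ S.P ∧ p ≤ S.inf (f⁻¹ * z * f)})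
      ⟨f, hf, hfw ▸ hp⟩ (fun _ h => h.1)
      (fun a ha b hb => ⟨S.wedge_mem ha.1 hb.1, le_inf_conj_wedge hΔ ha.2 hb.2⟩)
  set Q := max (S.sup z) p
  have hzQ : S.le z (m * S.Δ ^ Q) :=
    S.le_trans (S.sup_le_iff.1 (le_max_left _ _))
      (by simpa using (mul_zpow_le_mul_zpow_iff hΔ Q).2 (S.one_le_iff.2 hm))
  have hle := hmin (z⁻¹ * m * S.Δ ^ Q) ⟨by simpa [le_def, mul_assoc] using hzQ, by
    rwa [show (z⁻¹ * m * S.Δ ^ Q)⁻¹ * z * (z⁻¹ * m * S.Δ ^ Q)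
      = (S.Δ ^ Q)⁻¹ * (m⁻¹ * z * m) * S.Δ ^ Q by group, inf_conj_zpow hΔ]⟩
  refine ⟨m, hm, hmz, S.sup_le_iff.2 ?_⟩
  rw [le_def] at hle ⊢
  convert hle using 1
  group

lemma exists_mem_conj_sup_le_le_inf {q : ℤ} {z w : G} (hw : IsConj z w) (hq : S.sup w ≤ q) :
    ∃ m ∈ S.P, S.sup (m⁻¹ * z * m) ≤ q ∧ min (S.inf z) q ≤ S.inf (m⁻¹ * z * m) := by
  have hw' : IsConj z⁻¹ w⁻¹ := by
    obtain ⟨c, rfl⟩ := isConj_iff.1 hw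
    exact isConj_iff.2 ⟨c, by group⟩
  obtain ⟨m, hm, hinf, hsup⟩ := exists_mem_conj_le_inf_sup_le hΔ (p := -q) hw'
    (by rw [inf_inv hΔ]; omega)
  have := sup_conj_eq_neg_inf hΔ z m
  rw [show m⁻¹ * z⁻¹ * m = (m⁻¹ * z * m)⁻¹ by group, sup_inv hΔ, sup_inv hΔ] at hsup
  exact ⟨m, hm, by omega, by omega⟩

lemma exists_mem_conj_mem_SSS (x : G) : ∃ α ∈ S.P, α⁻¹ * x * α ∈ S.SSS x := by
  obtain ⟨y₁, hy₁, hinf⟩ := SS_nonempty hΔ x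
  obtain ⟨y₂, hy₂, hsup⟩ := exists_isConj_sup_le hΔ x
  obtain ⟨m₁, hm₁, hinf₁, -⟩ := exists_mem_conj_le_inf_sup_le hΔ hy₁ le_rfl
  set x₁ := m₁⁻¹ * x * m₁
  have hx₁ : IsConj x x₁ := isConj_inv_mul_mul x m₁
  obtain ⟨m₂, hm₂, hsup₂, hinf₂⟩ := exists_mem_conj_sup_le_le_inf hΔ (hx₁.symm.trans hy₂) le_rfl
  have hy₁₂ : S.inf y₁ ≤ S.sup y₂ := inf_le_sup_of_isConj hΔ (hy₂.symm.trans hy₁)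
  refine ⟨m₁ * m₂, S.P.mul_mem hm₁ hm₂, ?_⟩
  rw [show (m₁ * m₂)⁻¹ * x * (m₁ * m₂) = m₂⁻¹ * x₁ * m₂ by simp only [x₁]; group]
  refine ⟨hx₁.trans (isConj_inv_mul_mul x₁ m₂), fun z hz => ?_, fun z hz => ?_⟩
  · have := hinf z hz
    omega
  · exact hsup₂.trans (hsup z hz)

lemma wedge_conj_mem_SSS {x α β : G} (hα : α⁻¹ * x * α ∈ S.SSS x)
    (hβ : β⁻¹ * x * β ∈ S.SSS x) : (S.wedge α β)⁻¹ * x * S.wedge α β ∈ S.SSS x :=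
  ⟨isConj_inv_mul_mul x _,
    fun z hz => (hα.2.1 z hz).trans (le_inf_conj_wedge hΔ le_rfl (hβ.2.1 _ hα.1)),
    fun z hz => (sup_conj_wedge_le hΔ le_rfl (hβ.2.2 _ hα.1)).trans (hα.2.2 z hz)⟩

end DeltaConj

end Garside

open Garside in
theorem statement14 {G : Type*} [Group G] (S : Garside G) (x : G)
    (hc : ∃ e : ℕ, 1 ≤ e ∧ ∀ g : G, g * S.Δ ^ e = S.Δ ^ e * g) :
    ∃! ρ : G, ρ ∈ S.P ∧ ρ⁻¹ * x * ρ ∈ S.SSS x ∧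
      ∀ α : G, α ∈ S.P → α⁻¹ * x * α ∈ S.SSS x → S.le ρ α := by
  obtain ⟨e, he, hce⟩ := hc
  have hΔ : ∀ a ∈ S.P, S.Δ * a * S.Δ⁻¹ ∈ S.P :=
    fun a ha => S.delta_mul_mul_inv_mem_of_central he hce ha
  obtain ⟨ρ, ⟨hρ, hρx⟩, hmin⟩ := S.exists_le_forall_of_wedge_mem
    (D := {α | α ∈ S.P ∧ α⁻¹ * x * α ∈ S.SSS x}) (exists_mem_conj_mem_SSS hΔ x)
    (fun _ h => h.1) (fun a ha b hb => ⟨S.wedge_mem ha.1 hb.1, wedge_conj_mem_SSS hΔ ha.2 hb.2⟩)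
  refine ⟨ρ, ⟨hρ, hρx, fun α hα hαx => hmin α ⟨hα, hαx⟩⟩, ?_⟩
  rintro σ ⟨hσ, hσx, hσmin⟩
  exact S.le_antisymm (hσmin ρ hρ hρx) (hmin σ ⟨hσ, hσx⟩)

end GarsidePaper
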